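/- arXiv:2506.22885 — 6 statements merged into one kernel-verified Lean document; each statement's English description precedes it below -/
import Mathlib

section
/- Let Y and D be random variables with D taking finitely many values, and let S be a random vector taking finitely many values such that D = A(S) for a function A. Fix d with P(D=d) > 0 and P(D=d-1) > 0. Suppose a weighting function w on pairs (s_d, s_{d-1}) with A(s_d)=d, A(s_{d-1})=d-1 satisfies: (i) for each s_{d-1}, ∑_{s_d} w(s_d, s_{d-1}) = P(S=s_{d-1} | D=d-1), and (ii) for each s_d, ∑_{s_{d-1}} w(s_d, s_{d-1}) = P(S=s_d | D=d). Then E[Y | D=d] − E[Y | D=d-1] = ∑_{(s_d, s_{d-1})} w(s_d, s_{d-1}) · (E[Y | S=s_d] − E[Y | S=s_{d-1}]). -/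
open Finset

/- Probability of an event, conditional probability `P(A|B)`, and conditional
expectation `E[Y|A]` under a mass function `p` on a finite sample space. -/

open Classical in
noncomputable def Pr {Ω : Type*} [Fintype Ω] (p : Ω → ℝ) (A : Ω → Prop) : ℝ :=
  ∑ ω, if A ω then p ω else 0

noncomputable def cPr {Ω : Type*} [Fintype Ω] (p : Ω → ℝ) (A B : Ω → Prop) : ℝ :=
  Pr p (fun ω => A ω ∧ B ω) / Pr p B

open Classical in
noncomputable def cexp {Ω : Type*} [Fintype Ω] (p : Ω → ℝ) (Y : Ω → ℝ) (A : Ω → Prop) : ℝ :=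
  (∑ ω, if A ω then p ω * Y ω else 0) / Pr p A

/-! By total expectation over the fibre `A⁻¹(e)`, `E[Y | D = e]` is the mixture of the
`E[Y | S = s]` with weights `P(S = s | D = e)`. The two marginal constraints on `w` rewrite the
mixtures for `e = d` and `e = d - 1` as `w`-weighted double sums, whose difference is the claim. -/

section ConditionalExpectation

variable {Ω : Type*} [Fintype Ω] (p : Ω → ℝ)

theorem Pr_and_of_imp {A B : Ω → Prop} (hAB : ∀ ω, A ω → B ω) :
    Pr p (fun ω => A ω ∧ B ω) = Pr p A := by
  unfold Pr
  refine sum_congr rfl fun ω _ => ?_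
  by_cases hA : A ω <;> simp [hA, hAB]

open Classical in
theorem cPr_mul_cexp_of_imp (Y : Ω → ℝ) {A B : Ω → Prop} (hAB : ∀ ω, A ω → B ω)
    (hA : Pr p A ≠ 0) :
    cPr p A B * cexp p Y A = (∑ ω, if A ω then p ω * Y ω else 0) / Pr p B := by
  rw [cPr, cexp, Pr_and_of_imp p hAB]
  field_simp

theorem cexp_eq_sum_cPr_mul_cexp {V : Type*} (Y : Ω → ℝ) (S : Ω → V)
    {B : Ω → Prop} {t : Finset V} (hB : ∀ ω, B ω ↔ S ω ∈ t)
    (hpos : ∀ s ∈ t, Pr p (fun ω => S ω = s) ≠ 0) :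
    cexp p Y B = ∑ s ∈ t, cPr p (fun ω => S ω = s) B * cexp p Y (fun ω => S ω = s) := by
  classical
  have hfibre : ∀ s ∈ t, ∀ ω, S ω = s → B ω := fun s hs ω hω => (hB ω).2 (hω ▸ hs)
  rw [sum_congr rfl fun s hs => cPr_mul_cexp_of_imp p Y (hfibre s hs) (hpos s hs),
    ← sum_div, cexp, sum_comm]
  congr 1
  refine sum_congr rfl fun ω _ => ?_
  rw [sum_ite_eq, if_congr (hB ω) rfl rfl]

end ConditionalExpectation

theorem sum_mul_sub_sum_mul_eq_of_marginals {α β : Type*} {s : Finset α} {t : Finset β}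
    (w : α → β → ℝ) {μ : α → ℝ} {ν : β → ℝ} (f : α → ℝ) (g : β → ℝ)
    (hμ : ∀ a ∈ s, ∑ b ∈ t, w a b = μ a) (hν : ∀ b ∈ t, ∑ a ∈ s, w a b = ν b) :
    ∑ a ∈ s, μ a * f a - ∑ b ∈ t, ν b * g b = ∑ a ∈ s, ∑ b ∈ t, w a b * (f a - g b) := by
  simp only [mul_sub, sum_sub_distrib]
  congr 1
  · exact sum_congr rfl fun a ha => by rw [← hμ a ha, sum_mul]
  · rw [sum_comm]
    exact sum_congr rfl fun b hb => by rw [← hν b hb, sum_mul]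

theorem marginal_decomposition_general
    {Ω V : Type*} [Fintype Ω] [Fintype V]
    (p : Ω → ℝ)
    (Y : Ω → ℝ) (S : Ω → V) (A : V → ℕ) (D : Ω → ℕ) (hD : ∀ ω, D ω = A (S ω))
    (d : ℕ)
    (hposS : ∀ s : V, (A s = d ∨ A s = d - 1) → 0 < Pr p (fun ω => S ω = s))
    (w : V → V → ℝ)
    (hw1 : ∀ s' : V, A s' = d - 1 →
      ∑ s ∈ univ.filter (fun s => A s = d), w s s'
        = cPr p (fun ω => S ω = s') (fun ω => D ω = d - 1))
    (hw2 : ∀ s : V, A s = d →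
      ∑ s' ∈ univ.filter (fun s' => A s' = d - 1), w s s'
        = cPr p (fun ω => S ω = s) (fun ω => D ω = d)) :
    cexp p Y (fun ω => D ω = d) - cexp p Y (fun ω => D ω = d - 1)
      = ∑ s ∈ univ.filter (fun s => A s = d),
          ∑ s' ∈ univ.filter (fun s' => A s' = d - 1),
            w s s' *
              (cexp p Y (fun ω => S ω = s) - cexp p Y (fun ω => S ω = s')) := by
  have hfibres : ∀ e ω, D ω = e ↔ S ω ∈ univ.filter (fun s => A s = e) := by
    simp [hD]
  rw [cexp_eq_sum_cPr_mul_cexp p Y S (hfibres d) fun s hs =>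
      (hposS s (Or.inl (mem_filter.1 hs).2)).ne',
    cexp_eq_sum_cPr_mul_cexp p Y S (hfibres (d - 1)) fun s hs =>
      (hposS s (Or.inr (mem_filter.1 hs).2)).ne']
  exact sum_mul_sub_sum_mul_eq_of_marginals w _ _
    (fun s hs => hw2 s (mem_filter.1 hs).2) (fun s hs => hw1 s (mem_filter.1 hs).2)

/-- Decomposition of the aggregate marginal effect: any weighting function `w`
coupling the conditional distributions of `S` given `D = d` and `D = d - 1`
represents `E[Y|D=d] − E[Y|D=d-1]` as a `w`-weighted sum of pairwise differences
of conditional means `E[Y|S=s_d] − E[Y|S=s_{d-1}]`. -/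
theorem marginal_decomposition
    {Ω V : Type*} [Fintype Ω] [Fintype V] [DecidableEq V]
    (p : Ω → ℝ) (hp0 : ∀ ω, 0 ≤ p ω) (hp1 : ∑ ω, p ω = 1)
    (Y : Ω → ℝ) (S : Ω → V) (A : V → ℕ) (D : Ω → ℕ) (hD : ∀ ω, D ω = A (S ω))
    (d : ℕ) (hd : 1 ≤ d)
    (hPd : 0 < Pr p (fun ω => D ω = d)) (hPd1 : 0 < Pr p (fun ω => D ω = d - 1))
    (hposS : ∀ s : V, (A s = d ∨ A s = d - 1) → 0 < Pr p (fun ω => S ω = s))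
    (w : V → V → ℝ)
    (hw1 : ∀ s' : V, A s' = d - 1 →
      ∑ s ∈ univ.filter (fun s => A s = d), w s s'
        = cPr p (fun ω => S ω = s') (fun ω => D ω = d - 1))
    (hw2 : ∀ s : V, A s = d →
      ∑ s' ∈ univ.filter (fun s' => A s' = d - 1), w s s'
        = cPr p (fun ω => S ω = s) (fun ω => D ω = d)) :
    cexp p Y (fun ω => D ω = d) - cexp p Y (fun ω => D ω = d - 1)
      = ∑ s ∈ univ.filter (fun s => A s = d),
          ∑ s' ∈ univ.filter (fun s' => A s' = d - 1),
            w s s' *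
              (cexp p Y (fun ω => S ω = s) - cexp p Y (fun ω => S ω = s')) :=
  marginal_decomposition_general p Y S A D hD d hposS w hw1 hw2
end

section
/- Suppose for every congruent pair (s_d, s_{d-1}) in ℤ_{≥0}^K (meaning s_d = s_{d-1} + e_k for some k, with coordinate sums d and d-1), the marginal effect MATT⁺(s_d, s_{d-1}) equals a constant β_d. Then for every incongruent pair (s_d, s_{d-1}) with coordinate sums d and d-1, MATT⁻(s_d, s_{d-1}) = β_d as well, where marginal effects are defined via a function m: ℤ_{≥0}^K → ℝ by MATT(s, s') = m(s) − m(s'). -/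
/-- Homogeneity of marginal effects: if `m(s + e_k) − m(s) = β` for every vector `s`
with coordinate sum `d - 1` and every coordinate `k` (all congruent marginal effects
equal `β_d`), then `m(s_d) − m(s_{d-1}) = β_d` for every pair of vectors with
coordinate sums `d` and `d - 1`, in particular for every incongruent pair. -/
theorem homogeneity_extends_to_incongruent (K d : ℕ) (hK : 2 ≤ K) (hd : 1 ≤ d)
    (m : (Fin K → ℕ) → ℝ) (β : ℝ)
    (hcong : ∀ (s : Fin K → ℕ) (k : Fin K), (∑ i, s i = d - 1) →
      m (s + Pi.single k 1) - m s = β) :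
    ∀ sd sdm1 : Fin K → ℕ, (∑ i, sd i = d) → (∑ i, sdm1 i = d - 1) →
      m sd - m sdm1 = β := by
  have hK0 : 0 < K := by omega
  set z : Fin K := ⟨0, hK0⟩ with hz
  have hsum_single : ∀ (k : Fin K) (s : Fin K → ℕ),
      ∑ i, ((s + Pi.single k 1 : Fin K → ℕ)) i = (∑ i, s i) + 1 := by
    intro k s
    simp [Pi.add_apply, Finset.sum_add_distrib, Finset.sum_pi_single']
  -- m is constant on the level set of sum d-1
  have const : ∀ n (s : Fin K → ℕ), ∑ i, s i = d - 1 → (d - 1) - s z = n →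
      m s = m (Pi.single z (d-1)) := by
    intro n
    induction n using Nat.strong_induction_on with
    | _ n ih =>
      intro s hs hn
      have hsz : s z ≤ d - 1 := by
        calc s z ≤ ∑ i, s i := Finset.single_le_sum (fun i _ => Nat.zero_le _) (Finset.mem_univ z)
        _ = d - 1 := hs
      by_cases h0 : s z = d - 1
      · -- s is the canonical vector
        have herase : ∑ i ∈ Finset.univ.erase z, s i = 0 := by
          have := Finset.add_sum_erase Finset.univ s (Finset.mem_univ z)
          omega
        have hzero : ∀ j, j ≠ z → s j = 0 := by
          intro j hj
          exact (Finset.sum_eq_zero_iff.mp herase) j (Finset.mem_erase.mpr ⟨hj, Finset.mem_univ j⟩)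
        congr 1
        funext j
        by_cases hj : j = z
        · subst hj; simp [h0, Pi.single_eq_same]
        · simp [Pi.single_apply, hj, hzero j hj]
      · -- find i ≠ z with s i > 0, move a unit to z
        have hlt : s z < d - 1 := lt_of_le_of_ne hsz h0
        have herase : ∑ i ∈ Finset.univ.erase z, s i = (d - 1) - s z := by
          have := Finset.add_sum_erase Finset.univ s (Finset.mem_univ z)
          omega
        have hpos : ∃ i ∈ Finset.univ.erase z, s i ≠ 0 := by
          by_contra h
          push_neg at h
          have : ∑ i ∈ Finset.univ.erase z, s i = 0 :=
            Finset.sum_eq_zero (fun i hi => h i hi)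
          omega
        obtain ⟨i, hi, hsi⟩ := hpos
        have hiz : i ≠ z := (Finset.mem_erase.mp hi).1
        set s' : Fin K → ℕ :=
          Function.update (Function.update s i (s i - 1)) z (s z + 1) with hs'
        have key : s' + Pi.single i 1 = s + Pi.single z 1 := by
          funext j
          by_cases hji : j = i
          · subst hji
            simp [hs', Function.update_apply, hiz, Pi.single_apply, (Ne.symm hiz)]
            omega
          · by_cases hjz : j = z
            · subst hjz
              simp [hs', Function.update_apply, Pi.single_apply, Ne.symm hiz]
            · simp [hs', Function.update_apply, hji, hjz, Pi.single_apply]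
        have hsum' : ∑ j, s' j = d - 1 := by
          have h1 := hsum_single i s'
          have h2 := hsum_single z s
          rw [key] at h1
          omega
        have hs'z : s' z = s z + 1 := by simp [hs', Function.update_apply]
        have e1 := hcong s' i hsum'
        have e2 := hcong s z hs
        rw [key] at e1
        have hms : m s = m s' := by linarith
        rw [hms]
        exact ih ((d-1) - s' z) (by omega) s' hsum' rfl
  intro sd sdm1 hsd hsdm1
  -- find a positive coordinate of sd
  have hpos : ∃ k, sd k ≠ 0 := by
    by_contra h
    push_neg at h
    have : ∑ i, sd i = 0 := Finset.sum_eq_zero (fun i _ => h i)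
    omega
  obtain ⟨k, hk⟩ := hpos
  set s : Fin K → ℕ := Function.update sd k (sd k - 1) with hsdef
  have keq : s + Pi.single k 1 = sd := by
    funext j
    by_cases hj : j = k
    · subst hj; simp [hsdef, Pi.single_apply]; omega
    · simp [hsdef, Function.update_apply, hj, Pi.single_apply]
  have hssum : ∑ j, s j = d - 1 := by
    have h1 := hsum_single k s
    rw [keq] at h1
    omega
  have e1 := hcong s k hssum
  rw [keq] at e1
  have c1 := const ((d-1) - s z) s hssum rfl
  have c2 := const ((d-1) - sdm1 z) sdm1 hsdm1 rfl
  linarith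
end

section
/- Let S be a finite-valued random vector in ℤ_{≥0}^K with D = ∑_k S_k. Fix d ≥ 1 with P(D=d) > 0 and P(D=d-1) > 0, and fix a coordinate k. If E[S_k | D=d] < E[S_k | D=d-1], then every weighting function w satisfying the coupling constraints (w ≥ 0, ∑_{s_d} w(s_d, s_{d-1}) = P(S=s_{d-1}|D=d-1), ∑_{s_{d-1}} w(s_d, s_{d-1}) = P(S=s_d|D=d)) must assign strictly positive weight to at least one incongruent pair (s_d, s_{d-1}), i.e., a pair for which s_d ≠ s_{d-1} + e_j for every coordinate j. -/
/-!
If every pair charged by the coupling `w` is congruent, then `s' k ≤ s k` on its support, so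
integrating `s k` and `s' k` against `w` gives `E[S_k | D = d-1] ≤ E[S_k | D = d]`: the marginal
constraints turn each conditional mean into a `w`-weighted sum over pairs.
-/

open Finset

theorem cexp_eq_sum_mul_cPr {Ω α : Type*} [Fintype Ω] [DecidableEq α] (p : Ω → ℝ)
    (X : Ω → α) (f : α → ℝ) (A : Ω → Prop) (P : α → Prop) [DecidablePred P]
    (hA : ∀ ω, A ω ↔ P (X ω)) :
    cexp p (fun ω => f (X ω)) A
      = ∑ a ∈ (univ.image X).filter P, f a * cPr p (fun ω => X ω = a) A := by
  classical
  have hnum : ∑ ω, (if A ω then p ω * f (X ω) else 0)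
      = ∑ a ∈ (univ.image X).filter P, f a * Pr p (fun ω => X ω = a ∧ A ω) := by
    simp only [Pr, mul_sum, ite_and, mul_ite, mul_zero]
    rw [sum_comm]
    refine sum_congr rfl fun ω _ => ?_
    rw [sum_ite_eq]
    by_cases hω : P (X ω) <;> simp [hA, hω, mul_comm]
  rw [cexp, hnum, sum_div]
  exact sum_congr rfl fun a _ => mul_div_assoc _ _ _

theorem sum_mul_le_sum_mul_of_coupling {α β : Type*} {A : Finset α} {B : Finset β}
    {w : α → β → ℝ} {μ : α → ℝ} {ν : β → ℝ} {f : α → ℝ} {g : β → ℝ}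
    (hw : ∀ a ∈ A, ∀ b ∈ B, 0 ≤ w a b)
    (hμ : ∀ a ∈ A, ∑ b ∈ B, w a b = μ a) (hν : ∀ b ∈ B, ∑ a ∈ A, w a b = ν b)
    (hgf : ∀ a ∈ A, ∀ b ∈ B, 0 < w a b → g b ≤ f a) :
    ∑ b ∈ B, g b * ν b ≤ ∑ a ∈ A, f a * μ a :=
  calc ∑ b ∈ B, g b * ν b = ∑ a ∈ A, ∑ b ∈ B, g b * w a b := by
        rw [sum_comm]
        exact sum_congr rfl fun b hb => by rw [← hν b hb, mul_sum]
    _ ≤ ∑ a ∈ A, ∑ b ∈ B, f a * w a b := by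
        refine sum_le_sum fun a ha => sum_le_sum fun b hb => ?_
        rcases (hw a ha b hb).eq_or_lt with hzero | hpos
        · simp [← hzero]
        · exact mul_le_mul_of_nonneg_right (hgf a ha b hb hpos) hpos.le
    _ = ∑ a ∈ A, f a * μ a := sum_congr rfl fun a ha => by rw [← hμ a ha, mul_sum]

theorem decreasing_mean_implies_incongruency_general
    {Ω : Type*} [Fintype Ω] (K : ℕ)
    (p : Ω → ℝ)
    (S : Ω → Fin K → ℕ) (D : Ω → ℕ) (hD : ∀ ω, D ω = ∑ i, S ω i)
    (d : ℕ)
    (k : Fin K)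
    (hdec : cexp p (fun ω => (S ω k : ℝ)) (fun ω => D ω = d)
          < cexp p (fun ω => (S ω k : ℝ)) (fun ω => D ω = d - 1))
    (w : (Fin K → ℕ) → (Fin K → ℕ) → ℝ)
    (hw0 : ∀ s s', 0 ≤ w s s')
    (hw1 : ∀ s' : Fin K → ℕ, (∑ i, s' i = d - 1) →
      ∑ s ∈ (univ.image S).filter (fun s => ∑ i, s i = d), w s s'
        = cPr p (fun ω => S ω = s') (fun ω => D ω = d - 1))
    (hw2 : ∀ s : Fin K → ℕ, (∑ i, s i = d) →
      ∑ s' ∈ (univ.image S).filter (fun s' => ∑ i, s' i = d - 1), w s s'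
        = cPr p (fun ω => S ω = s) (fun ω => D ω = d)) :
    ∃ s s' : Fin K → ℕ, (∑ i, s i = d) ∧ (∑ i, s' i = d - 1) ∧
      (∀ j : Fin K, s ≠ s' + Pi.single j 1) ∧ 0 < w s s' := by
  by_contra! hno_incongruent
  have hevent (n : ℕ) (ω : Ω) : D ω = n ↔ ∑ i, S ω i = n := by rw [hD]
  have hmono : ∀ s ∈ (univ.image S).filter (fun s => ∑ i, s i = d),
      ∀ s' ∈ (univ.image S).filter (fun s' => ∑ i, s' i = d - 1),
      0 < w s s' → (s' k : ℝ) ≤ s k := by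
    intro s hs s' hs' hpos
    obtain ⟨j, rfl⟩ : ∃ j, s = s' + Pi.single j 1 := by
      by_contra! hincongruent
      exact (hno_incongruent s s' (mem_filter.1 hs).2 (mem_filter.1 hs').2
        hincongruent).not_gt hpos
    exact_mod_cast Nat.le_add_right _ _
  refine hdec.not_ge ?_
  rw [cexp_eq_sum_mul_cPr p S (· k) (fun ω => D ω = d) (fun s => ∑ i, s i = d) (hevent d),
    cexp_eq_sum_mul_cPr p S (· k) (fun ω => D ω = d - 1) (fun s => ∑ i, s i = d - 1)
      (hevent (d - 1))]
  exact sum_mul_le_sum_mul_of_coupling (fun s _ s' _ => hw0 s s')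
    (fun s hs => hw2 s (mem_filter.1 hs).2) (fun s' hs' => hw1 s' (mem_filter.1 hs').2) hmono

/-- Decreasing sub-treatment means imply incongruency: if `E[S_k|D=d] < E[S_k|D=d-1]`,
then every nonnegative weighting function satisfying the coupling constraints with
respect to the conditional distributions of `S` given `D=d` and `D=d-1` must put
strictly positive weight on some incongruent pair `(s_d, s_{d-1})`. -/
theorem decreasing_mean_implies_incongruency
    {Ω : Type*} [Fintype Ω] (K : ℕ)
    (p : Ω → ℝ) (hp0 : ∀ ω, 0 ≤ p ω) (hp1 : ∑ ω, p ω = 1)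
    (S : Ω → Fin K → ℕ) (D : Ω → ℕ) (hD : ∀ ω, D ω = ∑ i, S ω i)
    (d : ℕ) (hd : 1 ≤ d)
    (hPd : 0 < Pr p (fun ω => D ω = d)) (hPd1 : 0 < Pr p (fun ω => D ω = d - 1))
    (k : Fin K)
    (hdec : cexp p (fun ω => (S ω k : ℝ)) (fun ω => D ω = d)
          < cexp p (fun ω => (S ω k : ℝ)) (fun ω => D ω = d - 1))
    (w : (Fin K → ℕ) → (Fin K → ℕ) → ℝ)
    (hw0 : ∀ s s', 0 ≤ w s s')
    (hw1 : ∀ s' : Fin K → ℕ, (∑ i, s' i = d - 1) →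
      ∑ s ∈ (univ.image S).filter (fun s => ∑ i, s i = d), w s s'
        = cPr p (fun ω => S ω = s') (fun ω => D ω = d - 1))
    (hw2 : ∀ s : Fin K → ℕ, (∑ i, s i = d) →
      ∑ s' ∈ (univ.image S).filter (fun s' => ∑ i, s' i = d - 1), w s s'
        = cPr p (fun ω => S ω = s) (fun ω => D ω = d)) :
    ∃ s s' : Fin K → ℕ, (∑ i, s i = d) ∧ (∑ i, s' i = d - 1) ∧
      (∀ j : Fin K, s ≠ s' + Pi.single j 1) ∧ 0 < w s s' :=
  decreasing_mean_implies_incongruency_general K p S D hD d k hdec w hw0 hw1 hw2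
end

section
/- Let Y and D be random variables with D taking values in {0, 1, .., N̄} and Var(D) > 0. Define α₁ = Cov(Y, D)/Var(D). Then α₁ = ∑_{d=1}^{N̄} ω(d)·(E[Y|D=d] − E[Y|D=d-1]), where ω(d) = (E[D | D ≥ d] − E[D])·P(D ≥ d) / Var(D). Moreover ω(d) ≥ 0 for all d and ∑_{d=1}^{N̄} ω(d) = 1. -/
/-!
Let `T d = E[(D - E D) · 𝟙{D ≥ d}]`, so that `ω(d) · Var(D) = T d`. Since
`T i - T (i + 1) = (i - E D) · P(D = i)` and `T` vanishes at `0` and at `N̄ + 1`, summation by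
parts turns `Cov(Y, D) = ∑ᵢ (i - E D) · E[Y | D = i] · P(D = i)` into
`∑_d T d · (E[Y | D = d] - E[Y | D = d - 1])`, while `∑_{d=1}^{N̄} T d = E[D (D - E D)] = Var(D)`.
Finally `T d ≥ 0` because `D - E D` and `𝟙{D ≥ d} - 𝟙{E D ≥ d}` have the same sign.
-/

open Finset

noncomputable def Ex {Ω : Type*} [Fintype Ω] (p : Ω → ℝ) (X : Ω → ℝ) : ℝ :=
  ∑ ω, p ω * X ω

section
variable {Ω : Type*} [Fintype Ω] (p : Ω → ℝ)

lemma Pr_eq_sum_ite (A : Ω → Prop) [DecidablePred A] :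
    Pr p A = ∑ ω, if A ω then p ω else 0 := by
  unfold Pr; congr!

lemma cexp_mul_Pr (hp0 : ∀ ω, 0 ≤ p ω) (X : Ω → ℝ) (A : Ω → Prop) [DecidablePred A] :
    cexp p X A * Pr p A = ∑ ω, if A ω then p ω * X ω else 0 := by
  rcases eq_or_ne (Pr p A) 0 with hA | hA
  · have hnull : ∀ ω, A ω → p ω = 0 := fun ω hω => by
      rw [Pr_eq_sum_ite, sum_eq_zero_iff_of_nonneg fun ω _ => by split_ifs <;> simp [hp0]] at hA
      simpa [hω] using hA ω (mem_univ ω)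
    rw [hA, mul_zero]
    exact (sum_eq_zero fun ω _ => by split_ifs with hω <;> simp [hnull ω, *]).symm
  · unfold cexp
    rw [div_mul_cancel₀ _ hA]
    congr!

lemma cexp_sub_mul_Pr (hp0 : ∀ ω, 0 ≤ p ω) (X : Ω → ℝ) (A : Ω → Prop) [DecidablePred A]
    (c : ℝ) : (cexp p X A - c) * Pr p A = ∑ ω, if A ω then p ω * (X ω - c) else 0 := by
  rw [sub_mul, cexp_mul_Pr p hp0, Pr_eq_sum_ite, mul_sum, ← sum_sub_distrib]
  exact sum_congr rfl fun ω _ => by split_ifs <;> ring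

lemma sum_mul_sub_Ex_eq_zero (hp1 : ∑ ω, p ω = 1) (X : Ω → ℝ) :
    ∑ ω, p ω * (X ω - Ex p X) = 0 := by
  simp only [mul_sub, sum_sub_distrib, ← sum_mul, hp1, one_mul, Ex]
  ring

end

lemma sum_range_sub_succ_mul {R : Type*} [CommRing R] (f g : ℕ → R) (N : ℕ) :
    ∑ i ∈ range (N + 1), (f i - f (i + 1)) * g i
      = f 0 * g 0 - f (N + 1) * g N + ∑ d ∈ Icc 1 N, f d * (g d - g (d - 1)) := by
  induction N with
  | zero => rw [zero_add, sum_range_one, Icc_eq_empty (by omega), sum_empty]; ring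
  | succ N ih =>
    rw [sum_range_succ, ih, sum_Icc_succ_top (by omega), Nat.add_sub_cancel]
    ring

section
variable {Ω : Type*} [Fintype Ω] (p : Ω → ℝ) (D : Ω → ℕ) (c : ℝ)

noncomputable def tailDev (d : ℕ) : ℝ :=
  ∑ ω, if d ≤ D ω then p ω * ((D ω : ℝ) - c) else 0

lemma tailDev_zero : tailDev p D c 0 = ∑ ω, p ω * ((D ω : ℝ) - c) := by
  simp [tailDev]

lemma tailDev_eq_zero {d : ℕ} (hd : ∀ ω, D ω < d) : tailDev p D c d = 0 :=
  sum_eq_zero fun ω _ => if_neg (hd ω).not_ge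

lemma tailDev_sub_tailDev_succ (i : ℕ) :
    tailDev p D c i - tailDev p D c (i + 1) = ((i : ℝ) - c) * Pr p (fun ω => D ω = i) := by
  rw [tailDev, tailDev, Pr_eq_sum_ite, mul_sum, ← sum_sub_distrib]
  refine sum_congr rfl fun ω _ => ?_
  rcases lt_trichotomy (D ω) i with h | rfl | h
  · simp [h.not_ge, h.ne, (h.trans i.lt_succ_self).not_ge]
  · rw [if_pos le_rfl, if_neg (Nat.not_succ_le_self _), if_pos rfl]; ring
  · simp [h.le, h.ne', Nat.succ_le_of_lt h]

lemma sum_Icc_tailDev {N : ℕ} (hDN : ∀ ω, D ω ≤ N) :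
    ∑ d ∈ Icc 1 N, tailDev p D c d = ∑ ω, p ω * D ω * ((D ω : ℝ) - c) := by
  unfold tailDev
  rw [sum_comm]
  refine sum_congr rfl fun ω _ => ?_
  have hIcc : {d ∈ Icc 1 N | d ≤ D ω} = Icc 1 (D ω) := by
    ext d; simp only [mem_filter, mem_Icc]; have := hDN ω; omega
  rw [← sum_filter, hIcc, sum_const, Nat.card_Icc, Nat.add_sub_cancel, nsmul_eq_mul]
  ring

lemma tailDev_nonneg (hp0 : ∀ ω, 0 ≤ p ω) (hc : ∑ ω, p ω * ((D ω : ℝ) - c) = 0) (d : ℕ) :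
    0 ≤ tailDev p D c d := by
  have hsign : ∀ ω, (if (d : ℝ) ≤ c then p ω * ((D ω : ℝ) - c) else 0)
      ≤ if d ≤ D ω then p ω * ((D ω : ℝ) - c) else 0 := fun ω => by
    split_ifs with hdc hdD hdD
    · exact le_rfl
    · exact mul_nonpos_of_nonneg_of_nonpos (hp0 ω) (by
        have : (D ω : ℝ) < d := by exact_mod_cast not_le.mp hdD
        linarith)
    · exact mul_nonneg (hp0 ω) (by
        have : (d : ℝ) ≤ D ω := by exact_mod_cast hdD
        linarith)
    · exact le_rfl
  calc 0 = ∑ ω, if (d : ℝ) ≤ c then p ω * ((D ω : ℝ) - c) else 0 := by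
        split_ifs <;> simp [hc]
    _ ≤ tailDev p D c d := sum_le_sum fun ω _ => hsign ω

end

section
variable {Ω : Type*} [Fintype Ω] {p : Ω → ℝ} {D : Ω → ℕ} {N : ℕ}

lemma Ex_mul_comp_eq_sum_range (hp0 : ∀ ω, 0 ≤ p ω) (hDN : ∀ ω, D ω ≤ N) (Y : Ω → ℝ)
    (f : ℕ → ℝ) :
    Ex p (fun ω => Y ω * f (D ω)) = ∑ i ∈ range (N + 1),
      f i * (cexp p Y (fun ω => D ω = i) * Pr p (fun ω => D ω = i)) := by
  simp_rw [cexp_mul_Pr p hp0, mul_sum, mul_ite, mul_zero]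
  rw [sum_comm, Ex]
  refine sum_congr rfl fun ω _ => ?_
  rw [sum_ite_eq, if_pos (mem_range.mpr (Nat.lt_succ_of_le (hDN ω)))]
  ring

lemma Ex_mul_sub_eq_sum_Icc_tailDev (hp0 : ∀ ω, 0 ≤ p ω) (hDN : ∀ ω, D ω ≤ N) {c : ℝ}
    (hc : ∑ ω, p ω * ((D ω : ℝ) - c) = 0) (Y : Ω → ℝ) :
    Ex p (fun ω => Y ω * ((D ω : ℝ) - c)) = ∑ d ∈ Icc 1 N, tailDev p D c d *
      (cexp p Y (fun ω => D ω = d) - cexp p Y (fun ω => D ω = d - 1)) := by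
  set m : ℕ → ℝ := fun i => cexp p Y (fun ω => D ω = i)
  calc Ex p (fun ω => Y ω * ((D ω : ℝ) - c))
      = ∑ i ∈ range (N + 1), ((i : ℝ) - c) * (m i * Pr p (fun ω => D ω = i)) :=
        Ex_mul_comp_eq_sum_range hp0 hDN Y (fun i => (i : ℝ) - c)
    _ = ∑ i ∈ range (N + 1), (tailDev p D c i - tailDev p D c (i + 1)) * m i :=
        sum_congr rfl fun i _ => by rw [tailDev_sub_tailDev_succ]; ring
    _ = ∑ d ∈ Icc 1 N, tailDev p D c d * (m d - m (d - 1)) := by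
        rw [sum_range_sub_succ_mul, tailDev_zero, hc,
          tailDev_eq_zero p D c fun ω => Nat.lt_succ_of_le (hDN ω)]
        ring

end

theorem yitzhaki_decomposition_general
    {Ω : Type*} [Fintype Ω]
    (p : Ω → ℝ) (hp0 : ∀ ω, 0 ≤ p ω) (hp1 : ∑ ω, p ω = 1)
    (Y : Ω → ℝ) (D : Ω → ℕ) (N : ℕ) (hDN : ∀ ω, D ω ≤ N)
    (Var : ℝ)
    (hVarDef : Var = Ex p (fun ω => ((D ω : ℝ)) ^ 2) - (Ex p (fun ω => (D ω : ℝ))) ^ 2)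
    (hVar : 0 < Var)
    (α₁ : ℝ)
    (hα : α₁ = (Ex p (fun ω => Y ω * (D ω : ℝ))
        - Ex p Y * Ex p (fun ω => (D ω : ℝ))) / Var)
    (ωreg : ℕ → ℝ)
    (hωdef : ∀ d, ωreg d =
      (cexp p (fun ω => (D ω : ℝ)) (fun ω => d ≤ D ω)
          - Ex p (fun ω => (D ω : ℝ))) * Pr p (fun ω => d ≤ D ω) / Var) :
    α₁ = ∑ d ∈ Finset.Icc 1 N,
          ωreg d * (cexp p Y (fun ω => D ω = d) - cexp p Y (fun ω => D ω = d - 1)) ∧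
    (∀ d ∈ Finset.Icc 1 N, 0 ≤ ωreg d) ∧
    ∑ d ∈ Finset.Icc 1 N, ωreg d = 1 := by
  set μ := Ex p (fun ω => (D ω : ℝ))
  have hcentred : ∑ ω, p ω * ((D ω : ℝ) - μ) = 0 := sum_mul_sub_Ex_eq_zero p hp1 _
  have hweight : ∀ d, ωreg d = tailDev p D μ d / Var := fun d => by
    rw [hωdef, cexp_sub_mul_Pr p hp0]; rfl
  have hcov : Ex p (fun ω => Y ω * (D ω : ℝ)) - Ex p Y * μ
      = Ex p (fun ω => Y ω * ((D ω : ℝ) - μ)) := by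
    simp only [Ex, sum_mul, ← sum_sub_distrib]
    exact sum_congr rfl fun ω _ => by ring
  have hvar : ∑ d ∈ Icc 1 N, tailDev p D μ d = Var := by
    rw [sum_Icc_tailDev p D μ hDN, hVarDef, sq μ]
    simp only [mul_sub, sum_sub_distrib, ← sum_mul]
    congr 1
    exact sum_congr rfl fun ω _ => by ring
  refine ⟨?_, fun d _ => ?_, ?_⟩
  · rw [hα, hcov, Ex_mul_sub_eq_sum_Icc_tailDev hp0 hDN hcentred, sum_div]
    exact sum_congr rfl fun d _ => by rw [hweight]; ring
  · rw [hweight]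
    exact div_nonneg (tailDev_nonneg p D μ hp0 hcentred d) hVar.le
  · simp_rw [hweight]
    rw [← sum_div, hvar, div_self hVar.ne']

/-- Discrete Yitzhaki decomposition: for `D` supported on `{0,…,N}` with positive
variance, the population regression slope `α₁ = Cov(Y,D)/Var(D)` equals
`∑_{d=1}^{N} ω(d)·(E[Y|D=d] − E[Y|D=d-1])` with
`ω(d) = (E[D|D ≥ d] − E[D])·P(D ≥ d)/Var(D)`; moreover the weights are nonnegative
and sum to one. -/
theorem yitzhaki_decomposition
    {Ω : Type*} [Fintype Ω]
    (p : Ω → ℝ) (hp0 : ∀ ω, 0 ≤ p ω) (hp1 : ∑ ω, p ω = 1)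
    (Y : Ω → ℝ) (D : Ω → ℕ) (N : ℕ) (hDN : ∀ ω, D ω ≤ N)
    (hpos : ∀ d ≤ N, 0 < Pr p (fun ω => D ω = d))
    (Var : ℝ)
    (hVarDef : Var = Ex p (fun ω => ((D ω : ℝ)) ^ 2) - (Ex p (fun ω => (D ω : ℝ))) ^ 2)
    (hVar : 0 < Var)
    (α₁ : ℝ)
    (hα : α₁ = (Ex p (fun ω => Y ω * (D ω : ℝ))
        - Ex p Y * Ex p (fun ω => (D ω : ℝ))) / Var)
    (ωreg : ℕ → ℝ)
    (hωdef : ∀ d, ωreg d =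
      (cexp p (fun ω => (D ω : ℝ)) (fun ω => d ≤ D ω)
          - Ex p (fun ω => (D ω : ℝ))) * Pr p (fun ω => d ≤ D ω) / Var) :
    α₁ = ∑ d ∈ Finset.Icc 1 N,
          ωreg d * (cexp p Y (fun ω => D ω = d) - cexp p Y (fun ω => D ω = d - 1)) ∧
    (∀ d ∈ Finset.Icc 1 N, 0 ≤ ωreg d) ∧
    ∑ d ∈ Finset.Icc 1 N, ωreg d = 1 :=
  yitzhaki_decomposition_general p hp0 hp1 Y D N hDN Var hVarDef hVar α₁ hα ωreg hωdef
end

section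
/- Let Y and D be random variables with D taking values in {0, 1, ..., N̄}, P(D=d) > 0 for all such d, and Var(D) > 0. Define α₁ = Cov(Y, D)/Var(D). Then α₁ = ∑_{d=1}^{N̄} ω̃(d)·(E[Y|D=d] − E[Y|D=0])/d, where ω̃(d) = d·(d − E[D])·P(D=d)/Var(D), and these weights satisfy ∑_{d=1}^{N̄} ω̃(d) = 1, with ω̃(d) < 0 for 0 < d < E[D] and ω̃(d) > 0 for d > E[D]. -/
open Finset

/-
Write `μ = E[D]`, `P d = P(D = d)` and `m d = E[Y | D = d]`. Conditioning on `D` gives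
`Cov(Y, D) = ∑_d (d - μ) P d m d` and `Var(D) = ∑_d d (d - μ) P d`. Since `∑_d (d - μ) P d = 0`,
`m d` may be replaced by the level effect `m d - m 0`, which kills the `d = 0` term; for `d ≠ 0`,
`(d - μ) P d / Var(D) = ω̃(d) / d`. The variance formula says that the weights sum to one, and
the sign of `ω̃(d)` is that of `d - μ`.
-/

section Moments

variable {Ω : Type*} [Fintype Ω] (p : Ω → ℝ)

theorem Ex_mul_sub_Ex (X Z : Ω → ℝ) :
    Ex p (fun ω => X ω * (Z ω - Ex p Z)) = Ex p (fun ω => X ω * Z ω) - Ex p X * Ex p Z := by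
  simp only [Ex, sum_mul, ← sum_sub_distrib]
  exact sum_congr rfl fun ω _ => by ring

theorem Ex_sub_Ex_self (hp1 : ∑ ω, p ω = 1) (X : Ω → ℝ) :
    Ex p (fun ω => X ω - Ex p X) = 0 := by
  have h1 : Ex p (fun _ => 1) = 1 := by simp only [Ex, mul_one, hp1]
  simpa [h1] using Ex_mul_sub_Ex p (fun _ => 1) X

variable {α : Type*} {D : Ω → α} {s : Finset α}

open Classical in
theorem Ex_mul_comp_eq_sum_ite (hD : ∀ ω, D ω ∈ s) (Z : Ω → ℝ) (g : α → ℝ) :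
    Ex p (fun ω => Z ω * g (D ω)) = ∑ a ∈ s, g a * ∑ ω, if D ω = a then p ω * Z ω else 0 := by
  simp only [Ex, mul_sum, mul_ite, mul_zero]
  rw [sum_comm]
  refine sum_congr rfl fun ω _ => ?_
  rw [sum_ite_eq_of_mem s (D ω) _ (hD ω)]
  ring

theorem Ex_comp_eq_sum_Pr (hD : ∀ ω, D ω ∈ s) (g : α → ℝ) :
    Ex p (fun ω => g (D ω)) = ∑ a ∈ s, g a * Pr p (fun ω => D ω = a) := by
  simpa [Pr] using Ex_mul_comp_eq_sum_ite p hD (fun _ => 1) g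

theorem Ex_mul_comp_eq_sum_Pr_mul_cexp (hD : ∀ ω, D ω ∈ s)
    (hP : ∀ a ∈ s, Pr p (fun ω => D ω = a) ≠ 0) (Z : Ω → ℝ) (g : α → ℝ) :
    Ex p (fun ω => Z ω * g (D ω)) =
      ∑ a ∈ s, g a * (Pr p (fun ω => D ω = a) * cexp p Z (fun ω => D ω = a)) := by
  rw [Ex_mul_comp_eq_sum_ite p hD]
  refine sum_congr rfl fun a ha => ?_
  rw [cexp, mul_div_cancel₀ _ (hP a ha)]

theorem sum_sub_Ex_comp_mul_Pr_eq_zero (hp1 : ∑ ω, p ω = 1) (hD : ∀ ω, D ω ∈ s) (f : α → ℝ) :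
    ∑ a ∈ s, (f a - Ex p (fun ω => f (D ω))) * Pr p (fun ω => D ω = a) = 0 := by
  rw [← Ex_comp_eq_sum_Pr p hD fun a => f a - Ex p (fun ω => f (D ω)), Ex_sub_Ex_self p hp1]

theorem Ex_mul_comp_sub_mul_Ex_eq_sum (hD : ∀ ω, D ω ∈ s)
    (hP : ∀ a ∈ s, Pr p (fun ω => D ω = a) ≠ 0) (Z : Ω → ℝ) (f : α → ℝ) :
    Ex p (fun ω => Z ω * f (D ω)) - Ex p Z * Ex p (fun ω => f (D ω)) =
      ∑ a ∈ s, (f a - Ex p (fun ω => f (D ω))) *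
        (Pr p (fun ω => D ω = a) * cexp p Z (fun ω => D ω = a)) := by
  rw [← Ex_mul_sub_Ex, Ex_mul_comp_eq_sum_Pr_mul_cexp p hD hP Z
    fun a => f a - Ex p (fun ω => f (D ω))]

theorem Ex_sq_comp_sub_sq_Ex_eq_sum (hD : ∀ ω, D ω ∈ s) (f : α → ℝ) :
    Ex p (fun ω => f (D ω) ^ 2) - Ex p (fun ω => f (D ω)) ^ 2 =
      ∑ a ∈ s, f a * (f a - Ex p (fun ω => f (D ω))) * Pr p (fun ω => D ω = a) := by
  rw [← Ex_comp_eq_sum_Pr p hD fun a => f a * (f a - Ex p (fun ω => f (D ω))), Ex_mul_sub_Ex]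
  simp only [sq]

end Moments

theorem Finset.sum_erase_mul_sub_eq_of_sum_eq_zero {ι : Type*} [DecidableEq ι] {s : Finset ι}
    {a : ι} {c : ι → ℝ} (hc : ∑ i ∈ s, c i = 0) (m : ι → ℝ) :
    ∑ i ∈ s.erase a, c i * (m i - m a) = ∑ i ∈ s, c i * m i := by
  rw [sum_erase _ (by rw [sub_self, mul_zero]), sum_congr rfl fun i _ => mul_sub (c i) _ _,
    sum_sub_distrib, ← sum_mul, hc, zero_mul, sub_zero]

theorem baseline_to_d_decomposition_general
    {Ω : Type*} [Fintype Ω]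
    (p : Ω → ℝ) (hp1 : ∑ ω, p ω = 1)
    (Y : Ω → ℝ) (D : Ω → ℕ) (N : ℕ) (hDN : ∀ ω, D ω ≤ N)
    (hpos : ∀ d ≤ N, 0 < Pr p (fun ω => D ω = d))
    (Var : ℝ)
    (hVarDef : Var = Ex p (fun ω => ((D ω : ℝ)) ^ 2) - (Ex p (fun ω => (D ω : ℝ))) ^ 2)
    (hVar : 0 < Var)
    (α₁ : ℝ)
    (hα : α₁ = (Ex p (fun ω => Y ω * (D ω : ℝ))
        - Ex p Y * Ex p (fun ω => (D ω : ℝ))) / Var)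
    (ωtil : ℕ → ℝ)
    (hωdef : ∀ d : ℕ, ωtil d =
      (d : ℝ) * ((d : ℝ) - Ex p (fun ω => (D ω : ℝ))) * Pr p (fun ω => D ω = d) / Var) :
    α₁ = ∑ d ∈ Finset.Icc 1 N,
          ωtil d * ((cexp p Y (fun ω => D ω = d) - cexp p Y (fun ω => D ω = 0)) / d) ∧
    ∑ d ∈ Finset.Icc 1 N, ωtil d = 1 ∧
    (∀ d ∈ Finset.Icc 1 N, (d : ℝ) < Ex p (fun ω => (D ω : ℝ)) → ωtil d < 0) ∧
    (∀ d ∈ Finset.Icc 1 N, Ex p (fun ω => (D ω : ℝ)) < (d : ℝ) → 0 < ωtil d) := by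
  set μ := Ex p (fun ω => (D ω : ℝ))
  set P : ℕ → ℝ := fun d => Pr p (fun ω => D ω = d)
  set m : ℕ → ℝ := fun d => cexp p Y (fun ω => D ω = d)
  have hω : ∀ d : ℕ, ωtil d = d * (d - μ) * P d / Var := hωdef
  have hD : ∀ ω, D ω ∈ Icc 0 N := fun ω => mem_Icc.2 ⟨Nat.zero_le _, hDN ω⟩
  have hIcc : Icc 1 N = (Icc 0 N).erase 0 := by
    rw [Icc_erase_left, ← Icc_add_one_left_eq_Ioc, zero_add]
  have hcentre : ∑ d ∈ Icc 0 N, (d - μ) * P d / Var = 0 := by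
    rw [← sum_div, sum_sub_Ex_comp_mul_Pr_eq_zero p hp1 hD, zero_div]
  refine ⟨?_, ?_, fun d hd hdμ => ?_, fun d hd hdμ => ?_⟩
  · calc α₁ = ∑ d ∈ Icc 0 N, (d - μ) * P d / Var * m d := by
          rw [hα, Ex_mul_comp_sub_mul_Ex_eq_sum p hD (fun d hd => (hpos d (mem_Icc.1 hd).2).ne'),
            sum_div]
          exact sum_congr rfl fun d _ => by ring
      _ = ∑ d ∈ Icc 1 N, (d - μ) * P d / Var * (m d - m 0) := by
          rw [hIcc, sum_erase_mul_sub_eq_of_sum_eq_zero hcentre]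
      _ = _ := sum_congr rfl fun d hd => by
          have hd0 : (d : ℝ) ≠ 0 := Nat.cast_ne_zero.2 (Nat.one_le_iff_ne_zero.1 (mem_Icc.1 hd).1)
          rw [hω]
          field_simp
          rfl
  · rw [hIcc, sum_erase _ (by rw [hω, Nat.cast_zero, zero_mul, zero_mul, zero_div]),
      sum_congr rfl fun d _ => hω d, ← sum_div,
      ← Ex_sq_comp_sub_sq_Ex_eq_sum p hD Nat.cast, ← hVarDef, div_self hVar.ne']
  · obtain ⟨hd1, hdN⟩ := mem_Icc.1 hd
    rw [hω]
    exact div_neg_of_neg_of_pos (mul_neg_of_neg_of_pos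
      (mul_neg_of_pos_of_neg (Nat.cast_pos.2 hd1) (sub_neg.2 hdμ)) (hpos d hdN)) hVar
  · obtain ⟨hd1, hdN⟩ := mem_Icc.1 hd
    rw [hω]
    exact div_pos (mul_pos (mul_pos (Nat.cast_pos.2 hd1) (sub_pos.2 hdμ)) (hpos d hdN)) hVar

/-- Baseline-to-`d` decomposition of the regression slope: for `D` supported on
`{0,…,N}` with positive variance, `α₁ = Cov(Y,D)/Var(D)` equals
`∑_{d=1}^{N} ω̃(d)·(E[Y|D=d] − E[Y|D=0])/d` with
`ω̃(d) = d·(d − E[D])·P(D=d)/Var(D)`; the weights sum to one, are negative for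
`0 < d < E[D]` and positive for `d > E[D]`. -/
theorem baseline_to_d_decomposition
    {Ω : Type*} [Fintype Ω]
    (p : Ω → ℝ) (hp0 : ∀ ω, 0 ≤ p ω) (hp1 : ∑ ω, p ω = 1)
    (Y : Ω → ℝ) (D : Ω → ℕ) (N : ℕ) (hDN : ∀ ω, D ω ≤ N)
    (hpos : ∀ d ≤ N, 0 < Pr p (fun ω => D ω = d))
    (Var : ℝ)
    (hVarDef : Var = Ex p (fun ω => ((D ω : ℝ)) ^ 2) - (Ex p (fun ω => (D ω : ℝ))) ^ 2)
    (hVar : 0 < Var)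
    (α₁ : ℝ)
    (hα : α₁ = (Ex p (fun ω => Y ω * (D ω : ℝ))
        - Ex p Y * Ex p (fun ω => (D ω : ℝ))) / Var)
    (ωtil : ℕ → ℝ)
    (hωdef : ∀ d : ℕ, ωtil d =
      (d : ℝ) * ((d : ℝ) - Ex p (fun ω => (D ω : ℝ))) * Pr p (fun ω => D ω = d) / Var) :
    α₁ = ∑ d ∈ Finset.Icc 1 N,
          ωtil d * ((cexp p Y (fun ω => D ω = d) - cexp p Y (fun ω => D ω = 0)) / d) ∧
    ∑ d ∈ Finset.Icc 1 N, ωtil d = 1 ∧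
    (∀ d ∈ Finset.Icc 1 N, (d : ℝ) < Ex p (fun ω => (D ω : ℝ)) → ωtil d < 0) ∧
    (∀ d ∈ Finset.Icc 1 N, Ex p (fun ω => (D ω : ℝ)) < (d : ℝ) → 0 < ωtil d) :=
  baseline_to_d_decomposition_general p hp1 Y D N hDN hpos Var hVarDef hVar α₁ hα ωtil hωdef
end

section
/- Let S be a finite-valued random vector with D = A(S) for an aggregation function A with A(s) = 0 iff s = 0. Assume Y(s) ⫫ S for all s and Y = Y(S). Define ATT(s) = E[Y(s) − Y(0) | S=s] and AATT(d) = ∑_{s: A(s)=d} P(S=s | D=d)·ATT(s). Then AATT(d) = E[Y | D=d] − E[Y | D=0] for every d with P(D=d) > 0 and P(D=0) > 0. -/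
/- By independence, `E[Y(s) · 1{S = v}] = E[Y(s)] · P(S = v)`, so every `ATT(s)` equals
`E[Y(s)] - E[Y(0)]`, and by consistency and `A(s) = 0 ↔ s = 0`, `E[Y | D = 0] = E[Y(0)]`.
Weighting by `P(S = s | D = d)` and summing over the fibre `A⁻¹(d)` gives
`E[Y · 1{D = d}] / P(D = d) - E[Y(0)]` by total probability and total expectation over
that fibre. -/

open Finset

open Classical in
/-- The unnormalised expectation `E[Y · 1_A]`. -/
noncomputable def expOn {Ω : Type*} [Fintype Ω] (p : Ω → ℝ) (Y : Ω → ℝ)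
    (A : Ω → Prop) : ℝ :=
  ∑ ω, if A ω then p ω * Y ω else 0

section
variable {Ω : Type*} [Fintype Ω] (p : Ω → ℝ)

theorem cexp_eq_expOn_div (Y : Ω → ℝ) (A : Ω → Prop) :
    cexp p Y A = expOn p Y A / Pr p A := rfl

theorem Pr_eq_expOn_one (A : Ω → Prop) : Pr p A = expOn p 1 A := by
  simp [Pr, expOn]

theorem Pr_congr {A B : Ω → Prop} (h : ∀ ω, A ω ↔ B ω) : Pr p A = Pr p B :=
  congrArg (Pr p) (funext fun ω => propext (h ω))

theorem expOn_congr {Y Z : Ω → ℝ} {A B : Ω → Prop} (hAB : ∀ ω, A ω ↔ B ω)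
    (hYZ : ∀ ω, A ω → Y ω = Z ω) : expOn p Y A = expOn p Z B := by
  unfold expOn
  refine sum_congr rfl fun ω _ => ?_
  by_cases hA : A ω
  · simp [hA, (hAB ω).1 hA, hYZ ω hA]
  · simp [hA, mt (hAB ω).2 hA]

theorem expOn_sub (Y Z : Ω → ℝ) (A : Ω → Prop) :
    expOn p (fun ω => Y ω - Z ω) A = expOn p Y A - expOn p Z A := by
  unfold expOn
  rw [← sum_sub_distrib]
  refine sum_congr rfl fun ω _ => ?_
  split_ifs <;> ring

theorem expOn_eq_mul_Pr_of_forall_eq {Y : Ω → ℝ} {A : Ω → Prop} {c : ℝ}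
    (h : ∀ ω, A ω → Y ω = c) : expOn p Y A = c * Pr p A := by
  unfold expOn Pr
  rw [mul_sum]
  refine sum_congr rfl fun ω _ => ?_
  by_cases hA : A ω
  · simp [hA, h ω hA, mul_comm]
  · simp [hA]

theorem expOn_eq_sum_fiberwise {β : Type*} [DecidableEq β] (Y : Ω → ℝ) {A : Ω → Prop}
    (g : Ω → β) (T : Finset β) (hT : ∀ ω, A ω → g ω ∈ T) :
    expOn p Y A = ∑ b ∈ T, expOn p Y (fun ω => g ω = b ∧ A ω) := by
  unfold expOn
  rw [sum_comm]
  refine sum_congr rfl fun ω _ => ?_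
  by_cases hA : A ω
  · simp [hA, hT ω hA]
  · simp [hA]

theorem expOn_eq_sum_values (Y : Ω → ℝ) (A : Ω → Prop) :
    expOn p Y A = ∑ y ∈ univ.image Y, y * Pr p (fun ω => Y ω = y ∧ A ω) := by
  classical
  rw [expOn_eq_sum_fiberwise p Y Y (univ.image Y) fun ω _ => mem_image_of_mem Y (mem_univ ω)]
  exact sum_congr rfl fun y _ => expOn_eq_mul_Pr_of_forall_eq p fun ω h => h.1

theorem expOn_eq_mul_Pr_of_indep (Y : Ω → ℝ) (E : Ω → Prop)
    (hind : ∀ B : Set ℝ,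
      Pr p (fun ω => Y ω ∈ B ∧ E ω) = Pr p (fun ω => Y ω ∈ B) * Pr p E) :
    expOn p Y E = expOn p Y (fun _ => True) * Pr p E := by
  rw [expOn_eq_sum_values, expOn_eq_sum_values, sum_mul]
  refine sum_congr rfl fun y _ => ?_
  rw [Pr_congr p fun ω => iff_of_eq (and_true (Y ω = y)), mul_assoc]
  exact congrArg (y * ·) (hind {y})

theorem cPr_of_imp {E F : Ω → Prop} (h : ∀ ω, E ω → F ω) :
    cPr p E F = Pr p E / Pr p F := by
  rw [cPr, Pr_congr p fun ω => and_iff_left_of_imp (h ω)]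

-- Multiplied through by `Pr p A` so as to survive the junk value `cexp p Y A = 0` at `Pr p A = 0`.
theorem Pr_mul_cexp_of_expOn_eq_mul {Y : Ω → ℝ} {A : Ω → Prop} {c : ℝ}
    (h : expOn p Y A = c * Pr p A) : Pr p A * cexp p Y A = c * Pr p A := by
  rw [cexp_eq_expOn_div, h]
  rcases eq_or_ne (Pr p A) 0 with hA | hA
  · simp [hA]
  · field_simp

variable {β γ : Type*} [DecidableEq β] [DecidableEq γ] (S : Ω → β) (A : β → γ)

theorem expOn_eq_sum_fiber (Ypot : β → Ω → ℝ) (d : γ) :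
    expOn p (fun ω => Ypot (S ω) ω) (fun ω => A (S ω) = d)
      = ∑ s ∈ (univ.image S).filter (fun s => A s = d),
          expOn p (Ypot s) (fun ω => S ω = s) := by
  have hT (ω : Ω) (h : A (S ω) = d) : S ω ∈ (univ.image S).filter (fun s => A s = d) :=
    mem_filter.2 ⟨mem_image_of_mem S (mem_univ ω), h⟩
  rw [expOn_eq_sum_fiberwise p _ S _ hT]
  refine sum_congr rfl fun s hs => expOn_congr p (fun ω => ?_) fun ω h => by rw [h.1]
  exact and_iff_left_of_imp fun h => h ▸ (mem_filter.1 hs).2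

theorem Pr_eq_sum_fiber (d : γ) :
    Pr p (fun ω => A (S ω) = d)
      = ∑ s ∈ (univ.image S).filter (fun s => A s = d), Pr p (fun ω => S ω = s) := by
  simp only [Pr_eq_expOn_one]
  exact expOn_eq_sum_fiber p S A (fun _ => 1) d

end

theorem aatt_identification_general
    {Ω : Type*} [Fintype Ω] (K : ℕ)
    (p : Ω → ℝ)
    (S : Ω → Fin K → ℕ) (A : (Fin K → ℕ) → ℕ) (D : Ω → ℕ)
    (hD : ∀ ω, D ω = A (S ω))
    (hA0 : ∀ s : Fin K → ℕ, A s = 0 ↔ s = 0)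
    (Ypot : (Fin K → ℕ) → Ω → ℝ) (Y : Ω → ℝ)
    (hcons : ∀ ω, Y ω = Ypot (S ω) ω)
    (hindep : ∀ (s v : Fin K → ℕ) (B : Set ℝ),
      Pr p (fun ω => Ypot s ω ∈ B ∧ S ω = v)
        = Pr p (fun ω => Ypot s ω ∈ B) * Pr p (fun ω => S ω = v))
    (d : ℕ) (hPd : 0 < Pr p (fun ω => D ω = d)) (hP0 : 0 < Pr p (fun ω => D ω = 0)) :
    ∑ s ∈ (univ.image S).filter (fun s => A s = d),
        cPr p (fun ω => S ω = s) (fun ω => D ω = d) *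
          cexp p (fun ω => Ypot s ω - Ypot 0 ω) (fun ω => S ω = s)
      = cexp p Y (fun ω => D ω = d) - cexp p Y (fun ω => D ω = 0) := by
  obtain rfl : D = fun ω => A (S ω) := funext hD
  obtain rfl : Y = fun ω => Ypot (S ω) ω := funext hcons
  set μ : (Fin K → ℕ) → ℝ := fun s => expOn p (Ypot s) fun _ => True
  have hind (s v : Fin K → ℕ) :
      expOn p (Ypot s) (fun ω => S ω = v) = μ s * Pr p (fun ω => S ω = v) :=
    expOn_eq_mul_Pr_of_indep p _ _ (hindep s v)
  have hterm : ∀ s ∈ (univ.image S).filter (fun s => A s = d),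
      cPr p (fun ω => S ω = s) (fun ω => A (S ω) = d) *
          cexp p (fun ω => Ypot s ω - Ypot 0 ω) (fun ω => S ω = s)
        = (μ s - μ 0) * Pr p (fun ω => S ω = s) / Pr p (fun ω => A (S ω) = d) := by
    intro s hs
    rw [cPr_of_imp p fun ω h => h ▸ (mem_filter.1 hs).2, div_mul_eq_mul_div,
      Pr_mul_cexp_of_expOn_eq_mul p (by rw [expOn_sub, hind, hind, sub_mul])]
  have hbase : cexp p (fun ω => Ypot (S ω) ω) (fun ω => A (S ω) = 0) = μ 0 := by
    have hiff (ω : Ω) : A (S ω) = 0 ↔ S ω = 0 := hA0 (S ω)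
    rw [Pr_congr p hiff] at hP0
    rw [cexp_eq_expOn_div, expOn_congr p hiff fun ω h => by rw [(hiff ω).1 h], hind,
      Pr_congr p hiff, mul_div_cancel_right₀ _ hP0.ne']
  rw [sum_congr rfl hterm, ← sum_div, cexp_eq_expOn_div, expOn_eq_sum_fiber, hbase]
  simp only [hind, sub_mul, sum_sub_distrib, ← mul_sum, ← Pr_eq_sum_fiber]
  field_simp

/-- Identification of the aggregate ATT: with `D = A(S)`, `A(s) = 0 ↔ s = 0`,
consistency `Y = Y(S)` and independence `Y(s) ⫫ S` for all `s`, the parameter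
`AATT(d) = ∑_{s : A(s)=d} P(S=s|D=d)·ATT(s)`, where
`ATT(s) = E[Y(s) − Y(0) | S=s]`, equals `E[Y|D=d] − E[Y|D=0]` whenever
`P(D=d) > 0` and `P(D=0) > 0`. -/
theorem aatt_identification
    {Ω : Type*} [Fintype Ω] (K : ℕ)
    (p : Ω → ℝ) (hp0 : ∀ ω, 0 ≤ p ω) (hp1 : ∑ ω, p ω = 1)
    (S : Ω → Fin K → ℕ) (A : (Fin K → ℕ) → ℕ) (D : Ω → ℕ)
    (hD : ∀ ω, D ω = A (S ω))
    (hA0 : ∀ s : Fin K → ℕ, A s = 0 ↔ s = 0)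
    (Ypot : (Fin K → ℕ) → Ω → ℝ) (Y : Ω → ℝ)
    (hcons : ∀ ω, Y ω = Ypot (S ω) ω)
    (hindep : ∀ (s v : Fin K → ℕ) (B : Set ℝ),
      Pr p (fun ω => Ypot s ω ∈ B ∧ S ω = v)
        = Pr p (fun ω => Ypot s ω ∈ B) * Pr p (fun ω => S ω = v))
    (d : ℕ) (hPd : 0 < Pr p (fun ω => D ω = d)) (hP0 : 0 < Pr p (fun ω => D ω = 0)) :
    ∑ s ∈ (univ.image S).filter (fun s => A s = d),
        cPr p (fun ω => S ω = s) (fun ω => D ω = d) *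
          cexp p (fun ω => Ypot s ω - Ypot 0 ω) (fun ω => S ω = s)
      = cexp p Y (fun ω => D ω = d) - cexp p Y (fun ω => D ω = 0) :=
  aatt_identification_general K p S A D hD hA0 Ypot Y hcons hindep d hPd hP0
end
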